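/- arXiv:2406.06429 — 6 statements merged into one kernel-verified Lean document; each statement's English description precedes it below -/
import Mathlib

section
/- Let f be a partially-bent Boolean function on n variables and let k = dim V(f). Then: (i) if f is balanced, Σ_{a ∈ 𝔽₂ⁿ, a ≠ 0} wt(D_a f) = 2^{2n-1}; (ii) if f is unbalanced, Σ_{a ∈ 𝔽₂ⁿ, a ≠ 0} wt(D_a f) = 2^{2n-1} − 2^{n+k-1}. -/
/-- The vector space 𝔽₂ⁿ. -/
abbrev BV (n : ℕ) := Fin n → ZMod 2

/-- First-order derivative of a Boolean function: `D_a f (x) = f (x + a) + f x`. -/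
def bderiv {n : ℕ} (f : BV n → ZMod 2) (a : BV n) : BV n → ZMod 2 :=
  fun x => f (x + a) + f x

/-- Weight of a Boolean function: the number of inputs mapped to 1. -/
noncomputable def bwt {n : ℕ} (f : BV n → ZMod 2) : ℕ := {x | f x = 1}.ncard

/-- `𝔉(f) = Σ_x (-1)^(f x)`. -/
def fou {n : ℕ} (f : BV n → ZMod 2) : ℤ := ∑ x : BV n, (-1 : ℤ) ^ (f x).val

/-- Component function `F_λ(x) = λ · F(x)` (dot product over 𝔽₂). -/
def cmpnt {n m : ℕ} (F : BV n → BV m) (l : BV m) : BV n → ZMod 2 :=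
  fun x => ∑ i, l i * F x i

/-- A Boolean function on n variables is balanced if its weight is `2^(n-1)`. -/
def IsBalanced {n : ℕ} (f : BV n → ZMod 2) : Prop := bwt f = 2 ^ (n - 1)

/-!
Write `𝔉(g) = Σ_x (-1)^{g x} = 2^n - 2 wt(g)`. Summing over `a` and using
`Σ_a 𝔉(D_a f) = 𝔉(f)^2` gives `2 Σ_{a ≠ 0} wt(D_a f) = 2^{2n} - 𝔉(f)^2`, so everything is
decided by `𝔉(f)`; balancedness means `𝔉(f) = 0`, which is case (i). For partially-bent `f` the
derivatives outside `V = V(f)` are balanced and contribute nothing to `Σ_a 𝔉(D_a f)`, while for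
`a ∈ V` the constant value of `D_a f` is additive in `a`, so
`𝔉(f)^2 = 2^n Σ_{a ∈ V} (-1)^{D_a f(0)}` is a character sum over `V`. If `𝔉(f) ≠ 0` the
character must be trivial, whence `𝔉(f)^2 = 2^{n+k}` and case (ii).
-/

open Finset

def signChar : AddChar (ZMod 2) ℤ where
  toFun v := (-1) ^ v.val
  map_zero_eq_one' := rfl
  map_add_eq_mul' := by decide

lemma signChar_eq (v : ZMod 2) : signChar v = 1 - 2 * if v = 1 then 1 else 0 := by
  revert v; decide

section Walsh

variable {n : ℕ}

lemma fou_eq_sum_signChar (g : BV n → ZMod 2) : fou g = ∑ x, signChar (g x) := rfl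

lemma bwt_eq_card_filter (g : BV n → ZMod 2) : bwt g = #{x | g x = 1} := by
  rw [bwt, ← Set.ncard_coe_finset, coe_filter_univ]

lemma fou_eq_two_pow_sub_two_mul_bwt (g : BV n → ZMod 2) : fou g = 2 ^ n - 2 * bwt g := by
  simp only [fou_eq_sum_signChar, signChar_eq, sum_sub_distrib, ← mul_sum, sum_boole,
    bwt_eq_card_filter]
  simp

lemma fou_eq_zero_iff_isBalanced (hn : 1 ≤ n) (g : BV n → ZMod 2) :
    fou g = 0 ↔ IsBalanced g := by
  rw [fou_eq_two_pow_sub_two_mul_bwt, IsBalanced, ← mul_pow_sub_one (by omega : n ≠ 0)]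
  constructor <;> intro h
  · exact_mod_cast (by linarith : (bwt g : ℤ) = 2 ^ (n - 1))
  · rw [h]; push_cast; ring

lemma fou_eq_of_forall_eq {g : BV n → ZMod 2} {c : ZMod 2} (h : ∀ x, g x = c) :
    fou g = signChar c * 2 ^ n := by
  simp [fou_eq_sum_signChar, h, mul_comm]

lemma bderiv_zero (f : BV n → ZMod 2) : bderiv f 0 = 0 := by
  funext x; simp only [bderiv, add_zero, CharTwo.add_self_eq_zero, Pi.zero_apply]

lemma bderiv_add (f : BV n → ZMod 2) (a b x : BV n) :
    bderiv f (a + b) x = bderiv f a (x + b) + bderiv f b x := by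
  simp only [bderiv, add_comm a b, ← add_assoc]
  rw [add_assoc (f _), CharTwo.add_self_eq_zero, add_zero]

lemma sum_fou_bderiv (f : BV n → ZMod 2) : ∑ a, fou (bderiv f a) = fou f ^ 2 := by
  simp only [fou_eq_sum_signChar, bderiv, AddChar.map_add_eq_mul]
  rw [sum_comm, sq, sum_mul]
  refine sum_congr rfl fun x _ => ?_
  rw [← sum_mul, mul_comm]
  congr 1
  exact Fintype.sum_equiv (Equiv.addLeft x) _ _ fun _ => rfl

lemma two_mul_sum_bwt_bderiv (f : BV n → ZMod 2) :
    2 * ((∑ a ∈ univ.filter (fun a : BV n => a ≠ 0), bwt (bderiv f a) : ℕ) : ℤ)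
      = 2 ^ (2 * n) - fou f ^ 2 := by
  have hzero : ∀ a ∈ univ, bwt (bderiv f a) ≠ 0 → a ≠ 0 := by
    rintro a - h rfl
    simp [bderiv_zero, bwt] at h
  rw [sum_filter_of_ne hzero, ← sum_fou_bderiv]
  simp only [fou_eq_two_pow_sub_two_mul_bwt, sum_sub_distrib, ← mul_sum, sum_const, card_univ,
    Fintype.card_fun, ZMod.card, Fintype.card_fin]
  push_cast
  rw [two_mul n, pow_add]
  ring

end Walsh

section LinearStructures

variable {n : ℕ} {f : BV n → ZMod 2} {V : Submodule (ZMod 2) (BV n)}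

lemma bderiv_eq_bderiv_zero {a : BV n} (ha : ∃ c, ∀ x, bderiv f a x = c) (x : BV n) :
    bderiv f a x = bderiv f a 0 := by
  obtain ⟨c, hc⟩ := ha
  rw [hc, hc]

def linearStructureConst (hV : ∀ a ∈ V, ∃ c, ∀ x, bderiv f a x = c) : V →+ ZMod 2 :=
  AddMonoidHom.mk' (fun a => bderiv f a 0) fun a b => by
    simp only [Submodule.coe_add, bderiv_add f a b, zero_add, bderiv_eq_bderiv_zero (hV a a.2)]

open Classical in
lemma fou_sq_eq_two_pow_mul_sum (hn : 1 ≤ n) (hbal : ∀ a ∉ V, IsBalanced (bderiv f a))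
    (hV : ∀ a ∈ V, ∃ c, ∀ x, bderiv f a x = c) :
    fou f ^ 2 = 2 ^ n * ∑ a : V, signChar (linearStructureConst hV a) := by
  rw [← sum_fou_bderiv, ← sum_filter_add_sum_filter_not univ (· ∈ V),
    sum_eq_zero (s := univ.filter (· ∉ V)) fun a ha =>
      (fou_eq_zero_iff_isBalanced hn _).2 (hbal a (mem_filter.1 ha).2),
    add_zero, sum_subtype (p := (· ∈ V)) _ (fun _ => by simp), mul_sum]
  refine sum_congr rfl fun a _ => ?_
  rw [fou_eq_of_forall_eq (bderiv_eq_bderiv_zero (hV a a.2)), mul_comm]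
  rfl

lemma fou_sq_of_not_isBalanced (hn : 1 ≤ n) (hbal : ∀ a ∉ V, IsBalanced (bderiv f a))
    (hV : ∀ a ∈ V, ∃ c, ∀ x, bderiv f a x = c) (hf : ¬ IsBalanced f) :
    fou f ^ 2 = 2 ^ (n + Module.finrank (ZMod 2) V) := by
  classical
  set ψ := signChar.compAddMonoidHom (linearStructureConst hV)
  have hsum := fou_sq_eq_two_pow_mul_sum hn hbal hV
  have hψ : ψ = 0 := by
    refine AddChar.sum_ne_zero_iff_eq_zero.1 fun h => hf ((fou_eq_zero_iff_isBalanced hn f).1 ?_)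
    rw [← pow_eq_zero_iff two_ne_zero, hsum]
    exact mul_eq_zero_of_right _ h
  have hψsum : ∑ a, ψ a = 2 ^ Module.finrank (ZMod 2) V := by
    rw [AddChar.sum_eq_ite, if_pos hψ, Module.card_eq_pow_finrank (K := ZMod 2), ZMod.card]
    push_cast; rfl
  rw [hsum, pow_add, ← hψsum]
  rfl

end LinearStructures

lemma eq_two_pow_pred_sub_two_pow_pred {S a b : ℕ} (hb : 1 ≤ b) (hba : b ≤ a)
    (h : 2 * (S : ℤ) = 2 ^ a - 2 ^ b) : S = 2 ^ (a - 1) - 2 ^ (b - 1) := by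
  obtain ⟨a, rfl⟩ := Nat.exists_eq_add_of_le' (hb.trans hba)
  obtain ⟨b, rfl⟩ := Nat.exists_eq_add_of_le' hb
  have hle : 2 ^ b ≤ 2 ^ a := Nat.pow_le_pow_right two_pos (by omega)
  have h' : 2 * (S : ℤ) = 2 * ((2 ^ a : ℕ) : ℤ) - 2 * ((2 ^ b : ℕ) : ℤ) := by
    push_cast; rw [h]; ring
  simp only [Nat.add_sub_cancel]
  omega

/-- For a partially-bent Boolean function f (every derivative is constant or balanced),
    with k = dim V(f) where V(f) is the space of linear structures:
    (i) if f is balanced, Σ_{a ≠ 0} wt(D_a f) = 2^(2n-1);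
    (ii) if f is unbalanced, Σ_{a ≠ 0} wt(D_a f) = 2^(2n-1) − 2^(n+k-1). -/
theorem sum_weight_partially_bent_derivatives (n : ℕ) (hn : 1 ≤ n) (f : BV n → ZMod 2)
    (hpb : ∀ a : BV n, (∃ c, ∀ x, bderiv f a x = c) ∨ IsBalanced (bderiv f a))
    (V : Submodule (ZMod 2) (BV n))
    (hV : (V : Set (BV n)) = {a : BV n | ∃ c, ∀ x, bderiv f a x = c})
    (k : ℕ) (hk : Module.finrank (ZMod 2) V = k) :
    (IsBalanced f →
      (∑ a ∈ Finset.univ.filter (fun a : BV n => a ≠ 0), bwt (bderiv f a)) = 2 ^ (2 * n - 1))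
    ∧ (¬ IsBalanced f →
      (∑ a ∈ Finset.univ.filter (fun a : BV n => a ≠ 0), bwt (bderiv f a))
          = 2 ^ (2 * n - 1) - 2 ^ (n + k - 1)) := by
  have hmem (a : BV n) : a ∈ V ↔ ∃ c, ∀ x, bderiv f a x = c := Set.ext_iff.1 hV a
  have hconst (a : BV n) (ha : a ∈ V) := (hmem a).1 ha
  have hbal (a : BV n) (ha : a ∉ V) : IsBalanced (bderiv f a) :=
    (hpb a).resolve_left (mt (hmem a).2 ha)
  have hsum := two_mul_sum_bwt_bderiv f
  refine ⟨fun hf => ?_, fun hf => ?_⟩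
  · rw [(fou_eq_zero_iff_isBalanced hn f).2 hf, zero_pow two_ne_zero, sub_zero,
      ← mul_pow_sub_one (by omega : 2 * n ≠ 0)] at hsum
    exact_mod_cast mul_left_cancel₀ two_ne_zero hsum
  · have hkn : k ≤ n := hk ▸ (Submodule.finrank_le V).trans_eq (Module.finrank_fin_fun _)
    rw [fou_sq_of_not_isBalanced hn hbal hconst hf, hk] at hsum
    exact eq_two_pow_pred_sub_two_pow_pred (by omega) (by omega) hsum
end

section
/- Let F : 𝔽₂ⁿ → 𝔽₂^m be a vectorial Boolean function with m ≥ n. Then Σ_{λ ∈ 𝔽₂^m, λ ≠ 0} Σ_{a ∈ 𝔽₂ⁿ} wt(D_a F_λ) ≤ 2^{2n-1}·(2^m − 2^{m-n}), and equality holds if and only if F is an embedding (i.e., injective). -/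
/-!
Expanding weights, `Σ_{λ ≠ 0} Σ_a wt(D_a F_λ)` counts the triples `(λ, x, y)` with
`λ · (F x + F y) = 1`. For fixed `x, y`, the map `λ ↦ λ · (F x + F y)` is a linear form on `𝔽₂^m`,
which takes the value `1` on exactly half of `𝔽₂^m` when `F x ≠ F y` and never otherwise.
So the sum is `2^(m-1)` times the number of pairs `(x, y)` with `F x ≠ F y`, which is at most
`2^n (2^n - 1)`, with equality exactly when `F` is injective.
-/

open Finset

section PairCount

variable {α β : Type*} [Fintype α] [DecidableEq β]

lemma diag_subset_filter_apply_eq (F : α → β) :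
    (univ : Finset α).diag ⊆ univ.filter fun p : α × α => F p.1 = F p.2 := by
  intro p hp
  rw [mem_diag] at hp
  simp [hp.2]

lemma filter_apply_eq_eq_diag_iff (F : α → β) :
    univ.filter (fun p : α × α => F p.1 = F p.2) = (univ : Finset α).diag ↔
      Function.Injective F := by
  constructor
  · intro h a b hab
    have hmem : (a, b) ∈ univ.filter fun p : α × α => F p.1 = F p.2 := by simp [hab]
    rw [h, mem_diag] at hmem
    exact hmem.2
  · intro hF
    ext p
    simp [mem_diag, hF.eq_iff]

lemma card_filter_apply_ne_add_card_filter_apply_eq (F : α → β) :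
    #{p : α × α | F p.1 ≠ F p.2} + #{p : α × α | F p.1 = F p.2} =
      Fintype.card α * Fintype.card α := by
  rw [add_comm, card_filter_add_card_filter_not, card_univ, Fintype.card_prod]

lemma card_le_card_filter_apply_eq (F : α → β) :
    Fintype.card α ≤ #{p : α × α | F p.1 = F p.2} := by
  simpa [diag_card] using card_le_card (diag_subset_filter_apply_eq F)

lemma card_filter_apply_eq_eq_card_iff (F : α → β) :
    #{p : α × α | F p.1 = F p.2} = Fintype.card α ↔ Function.Injective F := by
  rw [← filter_apply_eq_eq_diag_iff]
  constructor
  · intro h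
    exact (eq_of_subset_of_card_le (diag_subset_filter_apply_eq F) (by simp [diag_card, h])).symm
  · intro h
    rw [h, diag_card, card_univ]

lemma card_filter_apply_ne_le (F : α → β) :
    #{p : α × α | F p.1 ≠ F p.2} ≤ Fintype.card α * (Fintype.card α - 1) := by
  have := card_filter_apply_ne_add_card_filter_apply_eq F
  have := card_le_card_filter_apply_eq F
  rw [Nat.mul_sub_one]
  omega

lemma card_filter_apply_ne_eq_iff (F : α → β) :
    #{p : α × α | F p.1 ≠ F p.2} = Fintype.card α * (Fintype.card α - 1) ↔
      Function.Injective F := by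
  have := card_filter_apply_ne_add_card_filter_apply_eq F
  have := card_le_card_filter_apply_eq F
  rw [← card_filter_apply_eq_eq_card_iff, Nat.mul_sub_one]
  omega

end PairCount

lemma AddMonoidHom.two_mul_card_filter_eq_one {G : Type*} [AddGroup G] [Fintype G]
    (f : G →+ ZMod 2) (hf : Function.Surjective f) :
    2 * #{g | f g = 1} = Fintype.card G := by
  have hfib := AddMonoidHom.card_fiber_eq_of_mem_range f (hf 0) (hf 1)
  have hsplit := card_filter_add_card_filter_not (s := (univ : Finset G)) (fun g => f g = 1)
  have hne : ∀ u : ZMod 2, u ≠ 1 ↔ u = 0 := by decide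
  simp only [hne, hfib, card_univ] at hsplit
  omega

section DotProduct

variable {ι : Type*} [Fintype ι] [DecidableEq ι]

lemma card_filter_dotProduct_eq_one {v : ι → ZMod 2} (hv : v ≠ 0) :
    #{l : ι → ZMod 2 | l ⬝ᵥ v = 1} = 2 ^ (Fintype.card ι - 1) := by
  obtain ⟨j, hj⟩ := Function.ne_iff.mp hv
  have hvj : v j = 1 := (by decide : ∀ u : ZMod 2, u ≠ 0 → u = 1) _ hj
  let dot : (ι → ZMod 2) →+ ZMod 2 :=
    AddMonoidHom.mk' (· ⬝ᵥ v) fun l l' => add_dotProduct l l' v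
  have hdot : Function.Surjective dot := by
    intro u
    exact ⟨Pi.single j u, by simp [dot, single_dotProduct, hvj]⟩
  have h2 := dot.two_mul_card_filter_eq_one hdot
  have hpow : 2 ^ Fintype.card ι = 2 * 2 ^ (Fintype.card ι - 1) := by
    rw [← pow_succ', Nat.sub_add_cancel (Fintype.card_pos_iff.mpr ⟨j⟩)]
  rw [Fintype.card_pi, prod_const, card_univ, ZMod.card, hpow] at h2
  simpa [dot] using h2

lemma card_filter_dotProduct_eq_one_eq_ite (v : ι → ZMod 2) :
    #{l : ι → ZMod 2 | l ⬝ᵥ v = 1} = if v = 0 then 0 else 2 ^ (Fintype.card ι - 1) := by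
  split_ifs with hv
  · simp [hv]
  · exact card_filter_dotProduct_eq_one hv

end DotProduct

lemma bwt_eq_card {n : ℕ} (f : BV n → ZMod 2) : bwt f = #{x | f x = 1} := by
  rw [bwt, Set.ncard_eq_toFinset_card', Set.toFinset_ofPred]

lemma sum_bwt_bderiv {n : ℕ} (f : BV n → ZMod 2) :
    ∑ a, bwt (bderiv f a) = #{p : BV n × BV n | f p.1 + f p.2 = 1} := by
  simp only [bwt_eq_card, card_filter]
  rw [Fintype.sum_prod_type_right, sum_comm]
  refine sum_congr rfl fun x _ => ?_
  exact Fintype.sum_equiv (Equiv.addLeft x) _ _ fun _ => rfl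

lemma cmpnt_add_cmpnt {n m : ℕ} (F : BV n → BV m) (l : BV m) (x y : BV n) :
    cmpnt F l x + cmpnt F l y = l ⬝ᵥ (F x + F y) :=
  (dotProduct_add l (F x) (F y)).symm

lemma sum_sum_bwt_bderiv_cmpnt {n m : ℕ} (F : BV n → BV m) :
    ∑ l ∈ univ.filter (fun l : BV m => l ≠ 0), ∑ a : BV n, bwt (bderiv (cmpnt F l) a) =
      2 ^ (m - 1) * #{p : BV n × BV n | F p.1 ≠ F p.2} := by
  calc ∑ l ∈ univ.filter (fun l : BV m => l ≠ 0), ∑ a : BV n, bwt (bderiv (cmpnt F l) a)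
      = ∑ l : BV m, #{p : BV n × BV n | l ⬝ᵥ (F p.1 + F p.2) = 1} := by
        simp only [sum_bwt_bderiv, cmpnt_add_cmpnt]
        exact sum_filter_of_ne fun l _ h => by rintro rfl; simp at h
    _ = ∑ p : BV n × BV n, #{l : BV m | l ⬝ᵥ (F p.1 + F p.2) = 1} := by
        simp only [card_filter]
        exact sum_comm
    _ = ∑ p : BV n × BV n, if F p.1 = F p.2 then 0 else 2 ^ (m - 1) := by
        simp only [card_filter_dotProduct_eq_one_eq_ite, Fintype.card_fin, ← ZModModule.sub_eq_add,
          sub_eq_zero]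
    _ = 2 ^ (m - 1) * #{p : BV n × BV n | F p.1 ≠ F p.2} := by
        rw [sum_ite, sum_const_zero, zero_add, sum_const, smul_eq_mul, mul_comm]

lemma two_pow_two_mul_sub_one_mul {n m : ℕ} (hnm : n ≤ m) :
    2 ^ (2 * n - 1) * (2 ^ m - 2 ^ (m - n)) = 2 ^ (m - 1) * (2 ^ n * (2 ^ n - 1)) := by
  rcases n with _ | n
  · simp
  obtain ⟨k, rfl⟩ := Nat.exists_eq_add_of_le hnm
  have hsub : 2 ^ (n + 1 + k) - 2 ^ k = 2 ^ k * (2 ^ (n + 1) - 1) := by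
    rw [Nat.mul_sub_one, ← pow_add, add_comm k]
  rw [show 2 * (n + 1) - 1 = n + n + 1 by omega, show n + 1 + k - (n + 1) = k by omega,
    show n + 1 + k - 1 = n + k by omega, hsub]
  ring

theorem sum_weight_derivatives_vBf_general (n m : ℕ) (hnm : n ≤ m)
    (F : BV n → BV m) :
    (∑ l ∈ Finset.univ.filter (fun l : BV m => l ≠ 0),
        ∑ a : BV n, bwt (bderiv (cmpnt F l) a))
      ≤ 2 ^ (2 * n - 1) * (2 ^ m - 2 ^ (m - n))
    ∧ ((∑ l ∈ Finset.univ.filter (fun l : BV m => l ≠ 0),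
          ∑ a : BV n, bwt (bderiv (cmpnt F l) a))
        = 2 ^ (2 * n - 1) * (2 ^ m - 2 ^ (m - n))
      ↔ Function.Injective F) := by
  have hcard : Fintype.card (BV n) = 2 ^ n := by simp
  rw [sum_sum_bwt_bderiv_cmpnt, two_pow_two_mul_sub_one_mul hnm, ← hcard]
  exact ⟨Nat.mul_le_mul_left _ (card_filter_apply_ne_le F),
    (Nat.mul_right_inj (by positivity)).trans (card_filter_apply_ne_eq_iff F)⟩

/-- For m ≥ n, Σ_{λ ≠ 0} Σ_a wt(D_a F_λ) ≤ 2^(2n-1)·(2^m − 2^(m-n)),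
    with equality iff F is an embedding. -/
theorem sum_weight_derivatives_vBf (n m : ℕ) (hn : 1 ≤ n) (hnm : n ≤ m)
    (F : BV n → BV m) :
    (∑ l ∈ Finset.univ.filter (fun l : BV m => l ≠ 0),
        ∑ a : BV n, bwt (bderiv (cmpnt F l) a))
      ≤ 2 ^ (2 * n - 1) * (2 ^ m - 2 ^ (m - n))
    ∧ ((∑ l ∈ Finset.univ.filter (fun l : BV m => l ≠ 0),
          ∑ a : BV n, bwt (bderiv (cmpnt F l) a))
        = 2 ^ (2 * n - 1) * (2 ^ m - 2 ^ (m - n))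
      ↔ Function.Injective F) :=
  sum_weight_derivatives_vBf_general n m hnm F
end

section
/- Let F : 𝔽₂ⁿ → 𝔽₂^m be a vectorial Boolean function with m ≥ n. Then |B(F)| ≤ 2^m − 2^{m-n}. Moreover, if |B(F)| = 2^m − 2^{m-n}, then F is an embedding (i.e., injective) and for every λ ∉ B(F) the component F_λ is constant (so the remaining 2^{m-n} components are constant). -/
/-!
Write `W λ = ∑ x, (-1) ^ F_λ(x)` (this is `fou (cmpnt F λ)`). A component is balanced iff
`W λ = 0`, and always `|W λ| ≤ 2 ^ n`. Orthogonality of the characters `λ ↦ (-1) ^ (λ · v)`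
gives `∑ λ, (W λ) ^ 2 = 2 ^ m * #{(x, y) | F x = F y} ≥ 2 ^ (m + n)`, so at least `2 ^ (m - n)`
of the values `W λ` are nonzero. In the extremal case every inequality is tight: there are only
`2 ^ n` collisions, so `F` is injective, and every nonzero `W λ` is `± 2 ^ n`, so `F_λ` is
constant.
-/

lemma neg_one_pow_val_add (a b : ZMod 2) :
    (-1 : ℤ) ^ (a + b).val = (-1) ^ a.val * (-1) ^ b.val := by
  revert a b; decide

lemma sum_neg_one_pow_dotProduct {m : ℕ} (v : BV m) :
    ∑ l : BV m, (-1 : ℤ) ^ (l ⬝ᵥ v).val = if v = 0 then 2 ^ m else 0 := by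
  split_ifs with hv
  · simp [hv]
  obtain ⟨j, hj⟩ : ∃ j, v j ≠ 0 := Function.ne_iff.mp hv
  have hvj : v j = 1 := by revert hj; generalize v j = a; revert a; decide
  -- translating by `Pi.single j 1` flips every sign, so the sum equals its own negative
  have hflip (l : BV m) : (-1 : ℤ) ^ ((l + Pi.single j 1) ⬝ᵥ v).val = -(-1) ^ (l ⬝ᵥ v).val := by
    rw [add_dotProduct, single_dotProduct, one_mul, hvj, neg_one_pow_val_add]
    simp [ZMod.val_one]
  have hshift := Equiv.sum_comp (Equiv.addRight (Pi.single j 1 : BV m))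
    (fun l => (-1 : ℤ) ^ (l ⬝ᵥ v).val)
  simp only [Equiv.coe_addRight, hflip, Finset.sum_neg_distrib] at hshift
  linarith

section BooleanFunction

variable {n : ℕ} (f : BV n → ZMod 2)

lemma fou_eq_two_pow_sub : fou f = 2 ^ n - 2 * bwt f := by
  have hsign (a : ZMod 2) : (-1 : ℤ) ^ a.val = 1 - 2 * if a = 1 then 1 else 0 := by
    revert a; decide
  rw [fou, bwt, Set.ncard_eq_toFinset_card', Set.toFinset_ofPred]
  simp only [hsign, Finset.sum_sub_distrib, ← Finset.mul_sum, Finset.sum_boole]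
  simp

lemma isBalanced_iff_fou_eq_zero (hn : 1 ≤ n) : IsBalanced f ↔ fou f = 0 := by
  have hpow : (2 : ℤ) ^ n = 2 * 2 ^ (n - 1) := by rw [← pow_succ', Nat.sub_add_cancel hn]
  rw [IsBalanced, fou_eq_two_pow_sub, hpow]
  constructor
  · intro h
    rw [h]
    push_cast
    ring
  · intro h
    exact_mod_cast (by linarith : (bwt f : ℤ) = 2 ^ (n - 1))

lemma fou_sq_le : fou f ^ 2 ≤ (2 ^ n) ^ 2 := by
  have habs : |fou f| ≤ 2 ^ n :=
    calc |fou f| ≤ ∑ x : BV n, |(-1 : ℤ) ^ (f x).val| := Finset.abs_sum_le_sum_abs _ _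
      _ = 2 ^ n := by simp
  exact sq_le_sq' (abs_le.mp habs).1 (abs_le.mp habs).2

lemma exists_const_of_fou_sq_eq (h : fou f ^ 2 = (2 ^ n) ^ 2) : ∃ c, ∀ x, f x = c := by
  have hw : bwt f = 0 ∨ bwt f = 2 ^ n := by
    have : (bwt f : ℤ) * (bwt f - 2 ^ n) = 0 := by
      rw [fou_eq_two_pow_sub] at h
      exact mul_left_cancel₀ four_ne_zero (by linear_combination h)
    rcases mul_eq_zero.mp this with h0 | h0
    · exact Or.inl (by exact_mod_cast h0)
    · exact Or.inr (by exact_mod_cast sub_eq_zero.mp h0)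
  rcases hw with hzero | hfull
  · have hempty : {x | f x = 1} = ∅ := (Set.ncard_eq_zero).mp hzero
    refine ⟨0, fun x => ?_⟩
    have hx : f x ≠ 1 := fun hx => (Set.eq_empty_iff_forall_notMem.mp hempty) x hx
    revert hx; generalize f x = a; revert a; decide
  · have huniv : {x | f x = 1} = Set.univ :=
      Set.eq_of_subset_of_ncard_le (Set.subset_univ _) (by simpa [bwt] using hfull.ge)
    exact ⟨1, fun x => Set.eq_univ_iff_forall.mp huniv x⟩

end BooleanFunction

def collisions {α β : Type*} [Fintype α] [DecidableEq β] (F : α → β) : Finset (α × α) :=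
  Finset.univ.filter fun p => F p.1 = F p.2

section Collisions

variable {α β : Type*} [Fintype α] [DecidableEq β] (F : α → β)

lemma diag_subset_collisions : (Finset.univ : Finset α).diag ⊆ collisions F := by
  intro p hp
  simp_all [collisions]

lemma card_le_card_collisions : Fintype.card α ≤ (collisions F).card := by
  simpa using Finset.card_le_card (diag_subset_collisions F)

lemma injective_of_card_collisions_le (h : (collisions F).card ≤ Fintype.card α) :
    Function.Injective F := by
  have hdiag : (Finset.univ : Finset α).diag = collisions F :=
    Finset.eq_of_subset_of_card_le (diag_subset_collisions F) (by simpa using h)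
  intro x y hxy
  have hmem : (x, y) ∈ (Finset.univ : Finset α).diag := hdiag ▸ by simp [collisions, hxy]
  exact (Finset.mem_diag.mp hmem).2

end Collisions

section VectorialBooleanFunction

variable {n m : ℕ} (F : BV n → BV m)

lemma fou_cmpnt_sq (l : BV m) :
    fou (cmpnt F l) ^ 2 = ∑ p : BV n × BV n, (-1 : ℤ) ^ (l ⬝ᵥ (F p.1 + F p.2)).val := by
  rw [sq, fou, Finset.sum_mul_sum, ← Finset.sum_product']
  simp only [← neg_one_pow_val_add, dotProduct_add]
  rfl

lemma sum_fou_cmpnt_sq :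
    ∑ l : BV m, fou (cmpnt F l) ^ 2 = 2 ^ m * (collisions F).card := by
  have hchar2 (a b : BV m) : a + b = 0 ↔ a = b := by
    rw [add_eq_zero_iff_eq_neg, show -b = b from funext fun i => ZMod.neg_eq_self_mod_two _]
  simp only [fou_cmpnt_sq]
  rw [Finset.sum_comm]
  simp only [sum_neg_one_pow_dotProduct, hchar2, Finset.sum_ite, Finset.sum_const_zero,
    Finset.sum_const, collisions, nsmul_eq_mul, add_zero]
  ring

def walshSupport : Finset (BV m) := Finset.univ.filter fun l => fou (cmpnt F l) ≠ 0

lemma sum_walshSupport_fou_sq :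
    ∑ l ∈ walshSupport F, fou (cmpnt F l) ^ 2 = 2 ^ m * (collisions F).card := by
  rw [walshSupport, Finset.sum_filter_of_ne fun l _ h => by simpa using h, sum_fou_cmpnt_sq]

lemma ncard_balanced (hn : 1 ≤ n) :
    {l : BV m | IsBalanced (cmpnt F l)}.ncard = 2 ^ m - (walshSupport F).card := by
  have hcompl : {l : BV m | IsBalanced (cmpnt F l)}ᶜ = walshSupport F := by
    ext l
    simp [walshSupport, isBalanced_iff_fou_eq_zero _ hn]
  have hcard := Set.ncard_add_ncard_compl {l : BV m | IsBalanced (cmpnt F l)}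
  rw [hcompl, Set.ncard_coe_finset] at hcard
  simp only [Nat.card_eq_fintype_card, Fintype.card_pi, ZMod.card, Finset.prod_const,
    Finset.card_univ, Fintype.card_fin] at hcard
  omega

lemma two_pow_mul_card_collisions_le :
    (2 : ℤ) ^ m * (collisions F).card ≤ (walshSupport F).card * (2 ^ n) ^ 2 := by
  rw [← sum_walshSupport_fou_sq]
  simpa using Finset.sum_le_card_nsmul _ _ _ fun l _ => fou_sq_le (cmpnt F l)

lemma two_pow_le_card_collisions : (2 : ℤ) ^ n ≤ (collisions F).card := by
  exact_mod_cast (by simpa using card_le_card_collisions F)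

lemma two_pow_sub_mul_sq (hnm : n ≤ m) : (2 : ℤ) ^ (m - n) * (2 ^ n) ^ 2 = 2 ^ m * 2 ^ n := by
  rw [sq, ← mul_assoc, ← pow_add, Nat.sub_add_cancel hnm]

lemma two_pow_sub_le_card_walshSupport (hnm : n ≤ m) : 2 ^ (m - n) ≤ (walshSupport F).card := by
  have hsq : (2 : ℤ) ^ (m - n) * (2 ^ n) ^ 2 ≤ (walshSupport F).card * (2 ^ n) ^ 2 :=
    calc (2 : ℤ) ^ (m - n) * (2 ^ n) ^ 2 = 2 ^ m * 2 ^ n := two_pow_sub_mul_sq hnm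
      _ ≤ 2 ^ m * (collisions F).card := by gcongr; exact two_pow_le_card_collisions F
      _ ≤ (walshSupport F).card * (2 ^ n) ^ 2 := two_pow_mul_card_collisions_le F
  exact_mod_cast le_of_mul_le_mul_right hsq (by positivity)

lemma injective_of_card_walshSupport_eq (hnm : n ≤ m)
    (hcard : (walshSupport F).card = 2 ^ (m - n)) : Function.Injective F := by
  refine injective_of_card_collisions_le F ?_
  have h := two_pow_mul_card_collisions_le F
  rw [hcard, Nat.cast_pow, Nat.cast_ofNat, two_pow_sub_mul_sq hnm] at h
  have hC : ((collisions F).card : ℤ) ≤ 2 ^ n := le_of_mul_le_mul_left h (by positivity)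
  simpa using (by exact_mod_cast hC : (collisions F).card ≤ 2 ^ n)

lemma exists_const_of_card_walshSupport_eq (hnm : n ≤ m)
    (hcard : (walshSupport F).card = 2 ^ (m - n)) {l : BV m} (hl : l ∈ walshSupport F) :
    ∃ c, ∀ x, cmpnt F l x = c := by
  refine exists_const_of_fou_sq_eq _ ?_
  -- the sum of the termwise bounds `fou_sq_le` is attained, so each bound is attained
  have htotal : ∑ k ∈ walshSupport F, ((2 : ℤ) ^ n) ^ 2
      ≤ ∑ k ∈ walshSupport F, fou (cmpnt F k) ^ 2 := by
    rw [Finset.sum_const, nsmul_eq_mul, hcard, sum_walshSupport_fou_sq, Nat.cast_pow,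
      Nat.cast_ofNat, two_pow_sub_mul_sq hnm]
    gcongr
    exact two_pow_le_card_collisions F
  exact (Finset.sum_eq_sum_iff_of_le fun k _ => fou_sq_le (cmpnt F k)).mp
    (le_antisymm (Finset.sum_le_sum fun k _ => fou_sq_le (cmpnt F k)) htotal) l hl

end VectorialBooleanFunction

/-- For m ≥ n, |B(F)| ≤ 2^m − 2^(m-n); if equality holds then F is an embedding
    and every component which is not balanced is constant. -/
theorem balanced_components (n m : ℕ) (hn : 1 ≤ n) (hnm : n ≤ m) (F : BV n → BV m) :
    {l : BV m | IsBalanced (cmpnt F l)}.ncard ≤ 2 ^ m - 2 ^ (m - n)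
    ∧ ({l : BV m | IsBalanced (cmpnt F l)}.ncard = 2 ^ m - 2 ^ (m - n) →
        Function.Injective F
        ∧ ∀ l : BV m, l ∉ {l : BV m | IsBalanced (cmpnt F l)} →
            ∃ c, ∀ x, cmpnt F l x = c) := by
  have hB := ncard_balanced F hn
  have hlower := two_pow_sub_le_card_walshSupport F hnm
  have hupper : (walshSupport F).card ≤ 2 ^ m := by
    simpa using Finset.card_le_univ (walshSupport F)
  refine ⟨by omega, fun heq => ?_⟩
  have hcard : (walshSupport F).card = 2 ^ (m - n) := by
    have : 2 ^ (m - n) ≤ 2 ^ m := Nat.pow_le_pow_right two_pos (Nat.sub_le m n)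
    omega
  refine ⟨injective_of_card_walshSupport_eq F hnm hcard, fun l hl => ?_⟩
  exact exists_const_of_card_walshSupport_eq F hnm hcard
    (by simpa [walshSupport, isBalanced_iff_fou_eq_zero _ hn] using hl)
end

section
/- Let F : 𝔽₂ⁿ → 𝔽₂^m be an embedding (i.e., injective) with m ≥ n. Then |C(F)| ≤ 2^{m-n}. Moreover, if |C(F)| = 2^{m-n}, then for every λ ∉ C(F) the component F_λ is balanced (so the remaining 2^m − 2^{m-n} components are balanced). -/
/-! Up to the translation by `F 0`, the constant components are the `λ` orthogonal to the
span `V` of the differences `F x - F 0`, so `|C(F)| = 2 ^ (m - dim V)`; injectivity gives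
`2 ^ n` distinct differences, so `dim V ≥ n`. If `dim V = n`, these differences exhaust `V`,
so `x ↦ F x - F 0` is a bijection onto `V`; for `λ ∉ C(F)`, translating inside `V` by some
`w₀` with `λ · w₀ = 1` swaps the two fibres of `F_λ`. -/

open Module

lemma ncard_preimage_of_bijective {α β : Type*} {f : α → β} (hf : f.Bijective) (s : Set β) :
    (f ⁻¹' s).ncard = s.ncard :=
  Set.ncard_preimage_of_injective_subset_range hf.injective (by simp [hf.surjective.range_eq])

lemma zmod_two_eq_one_of_ne_zero : ∀ a : ZMod 2, a ≠ 0 → a = 1 := by decide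

lemma two_mul_ncard_eq_natCard_of_perm {α : Type*} [Finite α] (f : α → ZMod 2)
    (σ : Equiv.Perm α) (hσ : ∀ x, f (σ x) = f x + 1) : 2 * {x | f x = 1}.ncard = Nat.card α := by
  have hcompl : {x | f x = 1}ᶜ = σ ⁻¹' {x | f x = 1} := by
    ext x
    simp only [Set.mem_compl_iff, Set.mem_ofPred_eq, Set.mem_preimage, hσ]
    generalize f x = a
    revert a; decide
  rw [← Set.ncard_add_ncard_compl {x | f x = 1}, hcompl, ncard_preimage_of_bijective σ.bijective,
    two_mul]

lemma natCard_submodule_zmod_two {V : Type*} [AddCommGroup V] [Module (ZMod 2) V]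
    [Module.Finite (ZMod 2) V] (W : Submodule (ZMod 2) V) :
    Nat.card W = 2 ^ finrank (ZMod 2) W := by
  rw [Module.natCard_eq_pow_finrank (K := ZMod 2), Nat.card_zmod]

lemma natCard_bv (n : ℕ) : Nat.card (BV n) = 2 ^ n := by
  rw [Nat.card_eq_fintype_card, Fintype.card_fun, ZMod.card, Fintype.card_fin]

lemma isBalanced_of_two_mul_bwt_eq {n : ℕ} {f : BV n → ZMod 2} (h : 2 * bwt f = 2 ^ n) :
    IsBalanced f := by
  rcases n with _ | n
  · omega
  · rw [IsBalanced, Nat.add_sub_cancel]; omega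

section Components

variable {n m : ℕ} (F : BV n → BV m)

lemma cmpnt_eq_dotProduct (l : BV m) (x : BV n) : cmpnt F l x = l ⬝ᵥ F x := rfl

def diffSpan : Submodule (ZMod 2) (BV m) :=
  Submodule.span (ZMod 2) (Set.range fun x => F x - F 0)

def toDiffSpan (x : BV n) : diffSpan F := ⟨F x - F 0, Submodule.subset_span ⟨x, rfl⟩⟩

lemma toDiffSpan_injective (hF : Function.Injective F) : Function.Injective (toDiffSpan F) :=
  fun _ _ h => hF (sub_left_injective (congrArg Subtype.val h))

lemma le_finrank_diffSpan (hF : Function.Injective F) : n ≤ finrank (ZMod 2) (diffSpan F) := by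
  have hcard := Nat.card_le_card_of_injective _ (toDiffSpan_injective F hF)
  rw [natCard_bv, natCard_submodule_zmod_two] at hcard
  exact (Nat.pow_le_pow_iff_right (by norm_num)).mp hcard

lemma constant_cmpnt_iff (l : BV m) :
    (∃ c, ∀ x, cmpnt F l x = c) ↔
      dotProductEquiv (ZMod 2) (Fin m) l ∈ (diffSpan F).dualAnnihilator := by
  rw [← SetLike.mem_coe, diffSpan, Submodule.coe_dualAnnihilator_span]
  simp only [Set.mem_ofPred_eq, Set.range_subset_iff, SetLike.mem_coe, LinearMap.mem_ker,
    dotProductEquiv_apply_apply, dotProduct_sub, sub_eq_zero]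
  exact ⟨fun ⟨c, hc⟩ x => (hc x).trans (hc 0).symm, fun h => ⟨_, h⟩⟩

lemma ncard_constant_cmpnt :
    {l : BV m | ∃ c, ∀ x, cmpnt F l x = c}.ncard = 2 ^ (m - finrank (ZMod 2) (diffSpan F)) := by
  have hset : {l : BV m | ∃ c, ∀ x, cmpnt F l x = c} =
      dotProductEquiv (ZMod 2) (Fin m) ⁻¹' (diffSpan F).dualAnnihilator := by
    ext l; exact constant_cmpnt_iff F l
  rw [hset, ncard_preimage_of_bijective (dotProductEquiv (ZMod 2) (Fin m)).bijective,
    ← Nat.card_coe_set_eq, SetLike.coe_sort_coe, natCard_submodule_zmod_two]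
  have hdim := Subspace.finrank_add_finrank_dualAnnihilator_eq (diffSpan F)
  rw [Nat.eq_sub_of_add_eq' (hdim.trans (finrank_fin_fun _))]

lemma isBalanced_cmpnt_of_finrank_diffSpan_eq (hF : Function.Injective F)
    (hdim : finrank (ZMod 2) (diffSpan F) = n) {l : BV m} (hl : ¬ ∃ c, ∀ x, cmpnt F l x = c) :
    IsBalanced (cmpnt F l) := by
  have hbij : (toDiffSpan F).Bijective := (toDiffSpan_injective F hF).bijective_of_nat_card_le
    (by rw [natCard_bv, natCard_submodule_zmod_two, hdim])
  set e := Equiv.ofBijective _ hbij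
  set ψ := (dotProductEquiv (ZMod 2) (Fin m) l).domRestrict (diffSpan F)
  obtain ⟨w₀, hw₀⟩ : ∃ w₀, ψ w₀ = 1 := by
    rw [constant_cmpnt_iff, Submodule.mem_dualAnnihilator] at hl
    push Not at hl
    obtain ⟨w, hw, hne⟩ := hl
    exact ⟨⟨w, hw⟩, zmod_two_eq_one_of_ne_zero _ hne⟩
  have hψ : ∀ x, cmpnt F l x = ψ (e x) + cmpnt F l 0 := by
    simp [ψ, e, toDiffSpan, cmpnt_eq_dotProduct, dotProduct_sub]
  let σ : Equiv.Perm (BV n) := e.trans ((Equiv.addRight w₀).trans e.symm)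
  have hσ : ∀ x, cmpnt F l (σ x) = cmpnt F l x + 1 := by
    intro x
    rw [hψ (σ x), hψ x]
    simp only [σ, Equiv.trans_apply, Equiv.coe_addRight, Equiv.apply_symm_apply, map_add, hw₀]
    ring
  apply isBalanced_of_two_mul_bwt_eq
  rw [bwt, two_mul_ncard_eq_natCard_of_perm _ σ hσ, natCard_bv]

end Components

theorem constant_components_general (n m : ℕ) (F : BV n → BV m)
    (hF : Function.Injective F) :
    {l : BV m | ∃ c, ∀ x, cmpnt F l x = c}.ncard ≤ 2 ^ (m - n)
    ∧ ({l : BV m | ∃ c, ∀ x, cmpnt F l x = c}.ncard = 2 ^ (m - n) →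
        ∀ l : BV m, l ∉ {l : BV m | ∃ c, ∀ x, cmpnt F l x = c} →
          IsBalanced (cmpnt F l)) := by
  have hlow := le_finrank_diffSpan F hF
  have hup : finrank (ZMod 2) (diffSpan F) ≤ m :=
    (Submodule.finrank_le _).trans_eq (finrank_fin_fun _)
  rw [ncard_constant_cmpnt]
  refine ⟨Nat.pow_le_pow_right two_pos (by omega), fun heq l hl => ?_⟩
  have hdim : finrank (ZMod 2) (diffSpan F) = n := by
    have := Nat.pow_right_injective le_rfl heq
    omega
  exact isBalanced_cmpnt_of_finrank_diffSpan_eq F hF hdim hl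

/-- For an embedding F with m ≥ n, |C(F)| ≤ 2^(m-n); if equality holds then every
    component outside C(F) is balanced. -/
theorem constant_components (n m : ℕ) (hn : 1 ≤ n) (hnm : n ≤ m) (F : BV n → BV m)
    (hF : Function.Injective F) :
    {l : BV m | ∃ c, ∀ x, cmpnt F l x = c}.ncard ≤ 2 ^ (m - n)
    ∧ ({l : BV m | ∃ c, ∀ x, cmpnt F l x = c}.ncard = 2 ^ (m - n) →
        ∀ l : BV m, l ∉ {l : BV m | ∃ c, ∀ x, cmpnt F l x = c} →
          IsBalanced (cmpnt F l)) :=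
  constant_components_general n m F hF
end

section
/- Let n be odd, m ≥ n + 1, and let F : 𝔽₂ⁿ → 𝔽₂^m be an embedding (i.e., injective) such that every nontrivial component F_λ (λ ≠ 0) is partially-bent. Then |B(F)| ≥ 2^{m-1} + 2^{n-1} − 1, and equality holds if and only if for every λ ≠ 0 with F_λ unbalanced one has dim V(F_λ) = 1 (i.e., F_λ is an unbalanced semi-bent function). -/
namespace BooleanFunction

open scoped Classical Finset

variable {n : ℕ}

def χ (a : ZMod 2) : ℤ := (-1) ^ a.val

@[simp] lemma χ_zero : χ 0 = 1 := rfl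

@[simp] lemma χ_one : χ 1 = -1 := rfl

lemma χ_add (a b : ZMod 2) : χ (a + b) = χ a * χ b := by
  revert a b; decide

lemma fou_eq_sum_χ (f : BV n → ZMod 2) : fou f = ∑ x, χ (f x) := rfl

lemma sum_eq_zero_of_map_add_eq_neg {G R : Type*} [AddGroup G] [Fintype G] [Ring R]
    [NoZeroDivisors R] [CharZero R] {g : G → R} (a : G) (h : ∀ x, g (x + a) = -g x) :
    ∑ x, g x = 0 := by
  have := Fintype.sum_equiv (Equiv.addRight a) (fun x => g (x + a)) g fun _ => rfl
  simp only [h, Finset.sum_neg_distrib] at this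
  exact self_eq_neg.mp this.symm

lemma fou_eq_two_pow_sub_two_mul_bwt (f : BV n → ZMod 2) : fou f = 2 ^ n - 2 * bwt f := by
  have hχ : ∀ a : ZMod 2, χ a = 1 - 2 * if a = 1 then 1 else 0 := by decide
  simp_rw [fou_eq_sum_χ, hχ]
  rw [Finset.sum_sub_distrib, ← Finset.mul_sum, Finset.sum_boole, bwt,
    Set.ncard_eq_toFinset_card']
  simp

lemma isBalanced_iff_fou_eq_zero (hn : n ≠ 0) (f : BV n → ZMod 2) : IsBalanced f ↔ fou f = 0 := by
  obtain ⟨n, rfl⟩ := Nat.exists_eq_succ_of_ne_zero hn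
  rw [IsBalanced, fou_eq_two_pow_sub_two_mul_bwt, pow_succ, Nat.succ_sub_one]
  constructor <;> intro h
  · rw [h]; push_cast; ring
  · exact_mod_cast (by linarith : (bwt f : ℤ) = 2 ^ n)

lemma fou_eq_of_forall_eq {g : BV n → ZMod 2} {c : ZMod 2} (h : ∀ x, g x = c) :
    fou g = χ c * 2 ^ n := by
  simp [fou_eq_sum_χ, h, mul_comm]

lemma fou_eq_zero_of_bderiv_eq_one {f : BV n → ZMod 2} {a : BV n} (h : ∀ x, bderiv f a x = 1) :
    fou f = 0 := by
  rw [fou_eq_sum_χ]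
  refine sum_eq_zero_of_map_add_eq_neg a fun x => ?_
  have : f (x + a) = 1 + f x := by
    rw [← h x, bderiv, add_assoc, CharTwo.add_self_eq_zero, add_zero]
  rw [this, χ_add, χ_one, neg_one_mul]

lemma fou_sq_eq_sum_fou_bderiv (f : BV n → ZMod 2) :
    fou f ^ 2 = ∑ a, fou (bderiv f a) := by
  have hrow : ∀ x, ∑ y, χ (f x) * χ (f y) = ∑ a, χ (bderiv f a x) := fun x => by
    rw [← Fintype.sum_equiv (Equiv.addLeft x) (fun a => χ (f x) * χ (f (x + a))) _ fun _ => rfl]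
    simp only [bderiv, χ_add, mul_comm]
  simp only [fou_eq_sum_χ, sq, Finset.sum_mul_sum, hrow]
  exact Finset.sum_comm

def IsPartiallyBent (f : BV n → ZMod 2) : Prop :=
  ∀ a, (∃ c, ∀ x, bderiv f a x = c) ∨ IsBalanced (bderiv f a)

def linearStructures (f : BV n → ZMod 2) : Submodule (ZMod 2) (BV n) :=
  AddSubgroup.toZModSubmodule 2
    { carrier := {a | ∃ c, ∀ x, bderiv f a x = c}
      zero_mem' := ⟨0, fun x => by simp [bderiv, CharTwo.add_self_eq_zero]⟩
      add_mem' := by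
        rintro a b ⟨c, hc⟩ ⟨d, hd⟩
        refine ⟨c + d, fun x => ?_⟩
        rw [← hc (x + b), ← hd x]
        simp only [bderiv]
        rw [show x + (a + b) = x + b + a by abel]
        linear_combination -CharTwo.add_self_eq_zero (f (x + b))
      neg_mem' := by simp [ZModModule.neg_eq_self] }

lemma coe_linearStructures (f : BV n → ZMod 2) :
    (linearStructures f : Set (BV n)) = {a | ∃ c, ∀ x, bderiv f a x = c} := rfl

lemma card_filter_mem_submodule {K V : Type*} [Field K] [Fintype K] [AddCommGroup V]
    [Module K V] [Fintype V] (W : Submodule K V) :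
    #{x | x ∈ W} = Fintype.card K ^ Module.finrank K W := by
  rw [← Fintype.card_subtype, ← Nat.card_eq_fintype_card, Module.natCard_eq_pow_finrank (K := K),
    Nat.card_eq_fintype_card]

section PartiallyBent

variable {f : BV n → ZMod 2}

lemma bderiv_eq_zero_of_mem_linearStructures (hn : n ≠ 0) (hf : ¬ IsBalanced f) {a : BV n}
    (ha : a ∈ linearStructures f) (x : BV n) : bderiv f a x = 0 := by
  obtain ⟨c, hc⟩ := ha
  fin_cases c
  · exact hc x
  · exact absurd ((isBalanced_iff_fou_eq_zero hn f).mpr (fou_eq_zero_of_bderiv_eq_one hc)) hf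

lemma fou_bderiv_of_isPartiallyBent (hn : n ≠ 0) (hpb : IsPartiallyBent f)
    (hf : ¬ IsBalanced f) (a : BV n) :
    fou (bderiv f a) = if a ∈ linearStructures f then 2 ^ n else 0 := by
  split_ifs with ha
  · simp [fou_eq_of_forall_eq (bderiv_eq_zero_of_mem_linearStructures hn hf ha)]
  · exact (isBalanced_iff_fou_eq_zero hn _).mp ((hpb a).resolve_left ha)

lemma fou_sq_of_isPartiallyBent (hn : n ≠ 0) (hpb : IsPartiallyBent f) (hf : ¬ IsBalanced f) :
    fou f ^ 2 = 2 ^ (n + Module.finrank (ZMod 2) (linearStructures f)) := by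
  simp only [fou_sq_eq_sum_fou_bderiv, fou_bderiv_of_isPartiallyBent hn hpb hf]
  rw [← Finset.sum_filter, Finset.sum_const, card_filter_mem_submodule, ZMod.card,
    nsmul_eq_mul, pow_add]
  push_cast
  ring

lemma even_of_sq_eq_prime_pow {p e : ℕ} (hp : p.Prime) {t : ℤ} (h : t ^ 2 = p ^ e) : Even e := by
  have hnat : t.natAbs ^ 2 = p ^ e := by
    rw [← Int.natAbs_pow, h, Int.natAbs_pow, Int.natAbs_natCast]
  have := congrArg (·.factorization p) hnat
  simp only [Nat.factorization_pow, hp.factorization_self, Finsupp.smul_apply, smul_eq_mul,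
    mul_one] at this
  exact ⟨t.natAbs.factorization p, by omega⟩

lemma odd_finrank_linearStructures (hodd : Odd n) (hpb : IsPartiallyBent f)
    (hf : ¬ IsBalanced f) : Odd (Module.finrank (ZMod 2) (linearStructures f)) := by
  have heven := even_of_sq_eq_prime_pow Nat.prime_two
    (by exact_mod_cast fou_sq_of_isPartiallyBent hodd.pos.ne' hpb hf)
  rcases hodd with ⟨j, hj⟩
  rcases heven with ⟨r, hr⟩
  exact ⟨r - j - 1, by omega⟩

lemma two_pow_succ_le_fou_sq (hodd : Odd n) (hpb : IsPartiallyBent f) (hf : ¬ IsBalanced f) :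
    2 ^ (n + 1) ≤ fou f ^ 2 := by
  rw [fou_sq_of_isPartiallyBent hodd.pos.ne' hpb hf]
  have := (odd_finrank_linearStructures hodd hpb hf).pos
  exact pow_le_pow_right₀ one_le_two (by omega)

lemma fou_sq_eq_two_pow_succ_iff (hodd : Odd n) (hpb : IsPartiallyBent f)
    (hf : ¬ IsBalanced f) :
    fou f ^ 2 = 2 ^ (n + 1) ↔ Module.finrank (ZMod 2) (linearStructures f) = 1 := by
  rw [fou_sq_of_isPartiallyBent hodd.pos.ne' hpb hf, pow_right_inj₀ two_pos (by norm_num)]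
  omega

end PartiallyBent

section Embedding

variable {m : ℕ} (F : BV n → BV m)

lemma cmpnt_apply (l : BV m) (x : BV n) : cmpnt F l x = l ⬝ᵥ F x := rfl

lemma sum_χ_dotProduct (v : BV m) :
    ∑ l : BV m, χ (l ⬝ᵥ v) = if v = 0 then 2 ^ m else 0 := by
  split_ifs with hv
  · simp [hv]
  · obtain ⟨i, hi⟩ := Function.ne_iff.mp hv
    have hvi : v i = 1 := (by decide : ∀ b : ZMod 2, b ≠ 0 → b = 1) _ hi
    refine sum_eq_zero_of_map_add_eq_neg (Pi.single i 1) fun l => ?_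
    rw [add_dotProduct, single_dotProduct, hvi, one_mul, χ_add, χ_one, mul_neg_one]

lemma sum_fou_cmpnt_sq (hF : Function.Injective F) :
    ∑ l, fou (cmpnt F l) ^ 2 = 2 ^ (n + m) := by
  have hsq : ∀ l, fou (cmpnt F l) ^ 2 = ∑ x, ∑ y, χ (l ⬝ᵥ (F x + F y)) := fun l => by
    simp only [fou_eq_sum_χ, sq, Finset.sum_mul_sum, cmpnt_apply, dotProduct_add, χ_add]
  have hdiag : ∀ x y, F x + F y = 0 ↔ y = x := fun x y => by
    rw [add_eq_zero_iff_eq_neg, ZModModule.neg_eq_self, hF.eq_iff, eq_comm]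
  calc ∑ l, fou (cmpnt F l) ^ 2 = ∑ x, ∑ y, ∑ l : BV m, χ (l ⬝ᵥ (F x + F y)) := by
        simp only [hsq]
        rw [Finset.sum_comm]
        exact Finset.sum_congr rfl fun x _ => Finset.sum_comm
    _ = 2 ^ (n + m) := by
        simp only [sum_χ_dotProduct, hdiag, Finset.sum_ite_eq', Finset.mem_univ, if_true,
          Finset.sum_const, Finset.card_univ, Fintype.card_fun, ZMod.card, Fintype.card_fin,
          nsmul_eq_mul]
        push_cast
        ring

lemma fou_cmpnt_zero : fou (cmpnt F 0) = 2 ^ n := by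
  rw [fou_eq_of_forall_eq (c := 0) fun x => by simp [cmpnt], χ_zero, one_mul]

noncomputable def unbalancedComponents : Finset (BV m) :=
  ({l | ¬ IsBalanced (cmpnt F l)} : Finset (BV m)).erase 0

lemma mem_unbalancedComponents {l : BV m} :
    l ∈ unbalancedComponents F ↔ l ≠ 0 ∧ ¬ IsBalanced (cmpnt F l) := by
  simp [unbalancedComponents]

variable {F}

lemma two_pow_succ_mul_ncard_isBalanced_sub_eq_sum (hF : Function.Injective F) (hn : n ≠ 0) :
    (2 : ℤ) ^ (n + 1) *
        ({l : BV m | IsBalanced (cmpnt F l)}.ncard + 1 - (2 ^ (m - 1) + 2 ^ (n - 1))) =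
      ∑ l ∈ unbalancedComponents F, (fou (cmpnt F l) ^ 2 - 2 ^ (n + 1)) := by
  have hnm : n ≤ m := by
    simpa [pow_le_pow_iff_right₀] using Fintype.card_le_of_injective F hF
  have hzero : 0 ∈ ({l | ¬ IsBalanced (cmpnt F l)} : Finset (BV m)) := by
    simp [isBalanced_iff_fou_eq_zero hn, fou_cmpnt_zero]
  have hcard : {l : BV m | IsBalanced (cmpnt F l)}.ncard + #(unbalancedComponents F) + 1 =
      2 ^ m := by
    rw [add_assoc, unbalancedComponents, Finset.card_erase_add_one hzero,
      Set.ncard_eq_toFinset_card', Set.toFinset_ofPred, Finset.card_filter_add_card_filter_not]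
    simp
  have hbalanced : ∑ l with IsBalanced (cmpnt F l), fou (cmpnt F l) ^ 2 = 0 :=
    Finset.sum_eq_zero fun l hl => by
      rw [(isBalanced_iff_fou_eq_zero hn _).mp (Finset.mem_filter.mp hl).2, zero_pow two_ne_zero]
  have hsum : fou (cmpnt F 0) ^ 2 + ∑ l ∈ unbalancedComponents F, fou (cmpnt F l) ^ 2 =
      2 ^ (n + m) := by
    rw [unbalancedComponents, Finset.add_sum_erase _ (fun l => fou (cmpnt F l) ^ 2) hzero,
      ← sum_fou_cmpnt_sq F hF, ← Finset.sum_filter_add_sum_filter_not Finset.univ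
        (fun l => IsBalanced (cmpnt F l)), hbalanced, zero_add]
  have h2n : (2 : ℤ) ^ n = 2 * 2 ^ (n - 1) := by rw [← pow_succ', Nat.sub_add_cancel (by omega)]
  have h2m : (2 : ℤ) ^ m = 2 * 2 ^ (m - 1) := by rw [← pow_succ', Nat.sub_add_cancel (by omega)]
  have hcardℤ : ({l : BV m | IsBalanced (cmpnt F l)}.ncard : ℤ) + #(unbalancedComponents F) + 1 =
      2 * 2 ^ (m - 1) := by
    rw [← h2m]; exact_mod_cast hcard
  rw [fou_cmpnt_zero, pow_add, h2n, h2m] at hsum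
  rw [Finset.sum_sub_distrib, Finset.sum_const, nsmul_eq_mul, pow_succ, h2n]
  linear_combination 4 * 2 ^ (n - 1) * hcardℤ - hsum

end Embedding

end BooleanFunction

open BooleanFunction

theorem least_balanced_components_odd_general (n m : ℕ) (hodd : Odd n)
    (F : BV n → BV m) (hF : Function.Injective F)
    (hpb : ∀ l : BV m, l ≠ 0 → ∀ a : BV n,
      (∃ c, ∀ x, bderiv (cmpnt F l) a x = c) ∨ IsBalanced (bderiv (cmpnt F l) a)) :
    2 ^ (m - 1) + 2 ^ (n - 1) - 1 ≤ {l : BV m | IsBalanced (cmpnt F l)}.ncard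
    ∧ ({l : BV m | IsBalanced (cmpnt F l)}.ncard = 2 ^ (m - 1) + 2 ^ (n - 1) - 1 ↔
        ∀ l : BV m, l ≠ 0 → ¬ IsBalanced (cmpnt F l) →
          ∀ V : Submodule (ZMod 2) (BV n),
            (V : Set (BV n)) = {a : BV n | ∃ c, ∀ x, bderiv (cmpnt F l) a x = c} →
            Module.finrank (ZMod 2) V = 1) := by
  set N := {l : BV m | IsBalanced (cmpnt F l)}.ncard
  have hexcess := two_pow_succ_mul_ncard_isBalanced_sub_eq_sum hF hodd.pos.ne'
  have hT : ∀ l ∈ unbalancedComponents F,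
      IsPartiallyBent (cmpnt F l) ∧ ¬ IsBalanced (cmpnt F l) := fun l hl =>
    ((mem_unbalancedComponents F).mp hl).imp_left (hpb l)
  have hterm : ∀ l ∈ unbalancedComponents F, 0 ≤ fou (cmpnt F l) ^ 2 - 2 ^ (n + 1) :=
    fun l hl => sub_nonneg.mpr <| two_pow_succ_le_fou_sq hodd (hT l hl).1 (hT l hl).2
  have hpos : (0 : ℤ) < 2 ^ (n + 1) := by positivity
  have hle : 2 ^ (m - 1) + 2 ^ (n - 1) ≤ N + 1 := by
    have := (mul_nonneg_iff_of_pos_left hpos).mp (hexcess ▸ Finset.sum_nonneg hterm)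
    exact_mod_cast (by linarith : (2 ^ (m - 1) + 2 ^ (n - 1) : ℤ) ≤ N + 1)
  have heq : N + 1 = 2 ^ (m - 1) + 2 ^ (n - 1) ↔
      ∀ l ∈ unbalancedComponents F, Module.finrank (ZMod 2) (linearStructures (cmpnt F l)) = 1 := by
    rw [← Nat.cast_inj (R := ℤ), ← sub_eq_zero, ← mul_eq_zero_iff_left hpos.ne']
    push_cast
    rw [hexcess, Finset.sum_eq_zero_iff_of_nonneg hterm]
    refine forall₂_congr fun l hl => ?_
    rw [sub_eq_zero]
    exact fou_sq_eq_two_pow_succ_iff hodd (hT l hl).1 (hT l hl).2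
  refine ⟨tsub_le_iff_right.mpr hle, ?_⟩
  simp only [← coe_linearStructures, SetLike.coe_set_eq, forall_eq]
  simp only [mem_unbalancedComponents, and_imp] at heq
  rwa [eq_tsub_iff_add_eq_of_le (Nat.one_le_two_pow.trans (Nat.le_add_right _ _))]

/-- For n odd, m ≥ n+1, F an embedding whose nontrivial components are all
    partially-bent: |B(F)| ≥ 2^(m-1) + 2^(n-1) − 1, with equality iff every
    unbalanced nontrivial component has a 1-dimensional space of linear structures
    (i.e., is unbalanced semi-bent). -/
theorem least_balanced_components_odd (n m : ℕ) (hodd : Odd n)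
    (hnm : n + 1 ≤ m) (F : BV n → BV m) (hF : Function.Injective F)
    (hpb : ∀ l : BV m, l ≠ 0 → ∀ a : BV n,
      (∃ c, ∀ x, bderiv (cmpnt F l) a x = c) ∨ IsBalanced (bderiv (cmpnt F l) a)) :
    2 ^ (m - 1) + 2 ^ (n - 1) - 1 ≤ {l : BV m | IsBalanced (cmpnt F l)}.ncard
    ∧ ({l : BV m | IsBalanced (cmpnt F l)}.ncard = 2 ^ (m - 1) + 2 ^ (n - 1) - 1 ↔
        ∀ l : BV m, l ≠ 0 → ¬ IsBalanced (cmpnt F l) →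
          ∀ V : Submodule (ZMod 2) (BV n),
            (V : Set (BV n)) = {a : BV n | ∃ c, ∀ x, bderiv (cmpnt F l) a x = c} →
            Module.finrank (ZMod 2) V = 1) :=
  least_balanced_components_odd_general n m hodd F hF hpb
end

section
/- Let F : 𝔽₂ⁿ → 𝔽₂^m be an embedding (i.e., injective) with m ≥ n, and suppose Im(F) is an affine subspace of 𝔽₂^m (i.e., a coset t + W of a linear subspace W). Then (i) every component F_λ is either constant or balanced, and (ii) |B(F)| = 2^m − 2^{m-n} and |C(F)| = 2^{m-n}. -/
/-!
Write `Im F = t + W`. Translation by `w ∈ W` preserves `Im F`, so by injectivity it induces a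
permutation `σ` of `𝔽₂ⁿ` with `F_λ ∘ σ = F_λ + λ · w`. If `λ ⊥ W` then `F_λ ≡ λ · t` is constant;
otherwise some `σ` exchanges the zeros and the ones of `F_λ`, which is therefore balanced. Hence
the constant components form the annihilator of `W`, of size `2 ^ (m - dim W)`, and
`|W| = |Im F| = 2 ^ n`.
-/

open Function Module

lemma ZMod.two_cases (a : ZMod 2) : a = 0 ∨ a = 1 := by revert a; decide

lemma two_mul_ncard_setOf_eq_one_of_flip {α : Type*} [Finite α] (f : α → ZMod 2) (σ : α ≃ α)
    (hσ : ∀ x, f (σ x) = f x + 1) : 2 * {x | f x = 1}.ncard = Nat.card α := by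
  have himage : σ '' {x | f x = 1} = {x | f x = 1}ᶜ := by
    ext y
    obtain ⟨x, rfl⟩ := σ.surjective y
    simp only [σ.injective.mem_set_image, Set.mem_ofPred_eq, Set.mem_compl_iff, hσ]
    rcases ZMod.two_cases (f x) with h | h <;> simp [h]
  rw [← Set.ncard_add_ncard_compl {x | f x = 1}, ← himage,
    Set.ncard_image_of_injective _ σ.injective, two_mul]

lemma isBalanced_of_flip {n : ℕ} (f : BV n → ZMod 2) (σ : BV n ≃ BV n)
    (hσ : ∀ x, f (σ x) = f x + 1) : IsBalanced f := by
  have h := two_mul_ncard_setOf_eq_one_of_flip f σ hσ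
  rw [Nat.card_eq_fintype_card, Fintype.card_fun, ZMod.card, Fintype.card_fin] at h
  rw [IsBalanced, bwt]
  cases n with
  | zero => omega
  | succ n => rw [pow_succ] at h; simp only [Nat.add_sub_cancel]; omega

lemma not_isBalanced_const {n : ℕ} (hn : 1 ≤ n) (c : ZMod 2) :
    ¬ IsBalanced (fun _ : BV n => c) := by
  rcases ZMod.two_cases c with rfl | rfl
  · simpa [IsBalanced, bwt] using (pow_pos two_pos (n - 1)).ne
  · simp [IsBalanced, bwt, Nat.card_eq_fintype_card]
    omega

lemma exists_equiv_apply_eq_add {α V : Type*} [Finite α] [Add V] [IsRightCancelAdd V]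
    {F : α → V} (hF : Injective F) {w : V} (hw : ∀ x, F x + w ∈ Set.range F) :
    ∃ σ : α ≃ α, ∀ x, F (σ x) = F x + w := by
  choose σ hσ using hw
  have hinj : Injective σ := fun a b hab => hF (add_right_cancel (by rw [← hσ, ← hσ, hab]))
  exact ⟨Equiv.ofBijective σ (Finite.injective_iff_bijective.mp hinj), hσ⟩

lemma ncard_setOf_forall_dotProduct_eq_zero {K ι : Type*} [Field K] [Finite K] [Fintype ι]
    [DecidableEq ι] (W : Submodule K (ι → K)) :
    {l : ι → K | ∀ w ∈ W, l ⬝ᵥ w = 0}.ncard = Nat.card K ^ (Fintype.card ι - finrank K W) := by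
  have hset : {l : ι → K | ∀ w ∈ W, l ⬝ᵥ w = 0}
      = (dotProductEquiv K ι).symm '' (W.dualAnnihilator : Set (Dual K (ι → K))) := by
    rw [LinearEquiv.image_symm_eq_preimage]
    ext l
    simp [Submodule.mem_dualAnnihilator]
  have hrank := Subspace.finrank_add_finrank_dualAnnihilator_eq W
  rw [finrank_fintype_fun_eq_card] at hrank
  rw [hset, Set.ncard_image_of_injective _ (dotProductEquiv K ι).symm.injective,
    ← Nat.card_coe_set_eq, SetLike.coe_sort_coe, natCard_eq_pow_finrank (K := K)]
  congr 1
  omega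

section ImageCoset

variable {n m : ℕ} {F : BV n → BV m} {W : Submodule (ZMod 2) (BV m)} {t : BV m}

lemma cmpnt_apply (F : BV n → BV m) (l : BV m) (x : BV n) : cmpnt F l x = l ⬝ᵥ F x := rfl

variable (hrange : Set.range F = {v : BV m | ∃ w ∈ W, v = t + w})
include hrange

lemma add_mem_range_of_mem {w : BV m} (hw : w ∈ W) (x : BV n) : F x + w ∈ Set.range F := by
  obtain ⟨w', hw', hx⟩ : F x ∈ {v : BV m | ∃ w ∈ W, v = t + w} := hrange ▸ ⟨x, rfl⟩
  rw [hrange]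
  exact ⟨w' + w, W.add_mem hw' hw, by rw [hx, add_assoc]⟩

lemma cmpnt_eq_of_forall_dotProduct_eq_zero {l : BV m} (hl : ∀ w ∈ W, l ⬝ᵥ w = 0) (x : BV n) :
    cmpnt F l x = l ⬝ᵥ t := by
  obtain ⟨w, hw, hx⟩ : F x ∈ {v : BV m | ∃ w ∈ W, v = t + w} := hrange ▸ ⟨x, rfl⟩
  rw [cmpnt_apply, hx, dotProduct_add, hl w hw, add_zero]

variable (hF : Injective F)
include hF

lemma exists_equiv_cmpnt_eq_add {w : BV m} (hw : w ∈ W) (l : BV m) :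
    ∃ σ : BV n ≃ BV n, ∀ x, cmpnt F l (σ x) = cmpnt F l x + l ⬝ᵥ w := by
  obtain ⟨σ, hσ⟩ := exists_equiv_apply_eq_add hF (add_mem_range_of_mem hrange hw)
  exact ⟨σ, fun x => by rw [cmpnt_apply, hσ, dotProduct_add, cmpnt_apply]⟩

lemma cmpnt_const_iff (l : BV m) :
    (∃ c, ∀ x, cmpnt F l x = c) ↔ ∀ w ∈ W, l ⬝ᵥ w = 0 := by
  refine ⟨fun ⟨c, hc⟩ w hw => ?_, fun hl => ⟨_, cmpnt_eq_of_forall_dotProduct_eq_zero hrange hl⟩⟩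
  obtain ⟨σ, hσ⟩ := exists_equiv_cmpnt_eq_add hrange hF hw l
  simpa [hc] using hσ 0

lemma isBalanced_cmpnt_of_not_const (l : BV m) (hl : ¬ ∃ c, ∀ x, cmpnt F l x = c) :
    IsBalanced (cmpnt F l) := by
  rw [cmpnt_const_iff hrange hF] at hl
  push Not at hl
  obtain ⟨w, hw, hlw⟩ := hl
  obtain ⟨σ, hσ⟩ := exists_equiv_cmpnt_eq_add hrange hF hw l
  rw [(ZMod.two_cases _).resolve_left hlw] at hσ
  exact isBalanced_of_flip _ σ hσ

lemma isBalanced_cmpnt_iff (hn : 1 ≤ n) (l : BV m) :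
    IsBalanced (cmpnt F l) ↔ ¬ ∃ c, ∀ x, cmpnt F l x = c :=
  ⟨fun hb ⟨c, hc⟩ => not_isBalanced_const hn c (funext hc ▸ hb),
    isBalanced_cmpnt_of_not_const hrange hF l⟩

lemma finrank_eq_of_range_eq : finrank (ZMod 2) W = n := by
  have himage : (t + ·) '' (W : Set (BV m)) = Set.range F := by
    rw [hrange]
    ext v
    simp only [Set.mem_image, SetLike.mem_coe, Set.mem_ofPred_eq]
    exact ⟨fun ⟨w, hw, h⟩ => ⟨w, hw, h.symm⟩, fun ⟨w, hw, h⟩ => ⟨w, hw, h.symm⟩⟩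
  have hcard : Nat.card W = 2 ^ n := by
    rw [← SetLike.coe_sort_coe, Nat.card_coe_set_eq,
      ← Set.ncard_image_of_injective _ (add_right_injective t), himage,
      Set.ncard_range_of_injective hF]
    simp
  rw [natCard_eq_pow_finrank (K := ZMod 2), Nat.card_zmod] at hcard
  exact Nat.pow_right_injective le_rfl hcard

end ImageCoset

theorem balanced_ImageSpace_general (n m : ℕ) (hn : 1 ≤ n) (F : BV n → BV m)
    (hF : Function.Injective F)
    (haff : ∃ (W : Submodule (ZMod 2) (BV m)) (t : BV m),
      Set.range F = {v : BV m | ∃ w ∈ W, v = t + w}) :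
    (∀ l : BV m, (∃ c, ∀ x, cmpnt F l x = c) ∨ IsBalanced (cmpnt F l))
    ∧ {l : BV m | IsBalanced (cmpnt F l)}.ncard = 2 ^ m - 2 ^ (m - n)
    ∧ {l : BV m | ∃ c, ∀ x, cmpnt F l x = c}.ncard = 2 ^ (m - n) := by
  obtain ⟨W, t, hrange⟩ := haff
  have hconst : {l : BV m | ∃ c, ∀ x, cmpnt F l x = c}.ncard = 2 ^ (m - n) := by
    rw [Set.ext fun l => cmpnt_const_iff hrange hF l, ncard_setOf_forall_dotProduct_eq_zero,
      finrank_eq_of_range_eq hrange hF, Nat.card_zmod, Fintype.card_fin]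
  have hbal : {l : BV m | IsBalanced (cmpnt F l)} = {l | ∃ c, ∀ x, cmpnt F l x = c}ᶜ :=
    Set.ext fun l => isBalanced_cmpnt_iff hrange hF hn l
  refine ⟨fun l => or_iff_not_imp_left.mpr (isBalanced_cmpnt_of_not_const hrange hF l), ?_, hconst⟩
  rw [hbal, Set.ncard_compl, hconst, Nat.card_eq_fintype_card, Fintype.card_fun, ZMod.card,
    Fintype.card_fin]

/-- For an embedding F with m ≥ n whose image is an affine subspace of 𝔽₂^m:
    (i) every component is constant or balanced;
    (ii) F has exactly 2^m − 2^(m-n) balanced components and 2^(m-n) constant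
    components. -/
theorem balanced_ImageSpace (n m : ℕ) (hn : 1 ≤ n) (hnm : n ≤ m) (F : BV n → BV m)
    (hF : Function.Injective F)
    (haff : ∃ (W : Submodule (ZMod 2) (BV m)) (t : BV m),
      Set.range F = {v : BV m | ∃ w ∈ W, v = t + w}) :
    (∀ l : BV m, (∃ c, ∀ x, cmpnt F l x = c) ∨ IsBalanced (cmpnt F l))
    ∧ {l : BV m | IsBalanced (cmpnt F l)}.ncard = 2 ^ m - 2 ^ (m - n)
    ∧ {l : BV m | ∃ c, ∀ x, cmpnt F l x = c}.ncard = 2 ^ (m - n) :=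
  balanced_ImageSpace_general n m hn F hF haff
end
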